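/- arXiv:1404.0762 — 3 statements merged into one kernel-verified Lean document; each statement's English description precedes it below -/
import Mathlib

section
/- Let $\sigma \subset N_{\mathbb{R}}$ be a strongly convex rational polyhedral cone, let $\Gamma(\sigma)$ be the convex hull of the nonzero lattice points of $\sigma$, and let $\partial_c \Gamma(\sigma)$ be the union of the compact faces of $\Gamma(\sigma)$. Then every lattice point $v$ lying on $\partial_c\Gamma(\sigma)$ is a minimal element of $(\sigma \cap N) \setminus \{0\}$ with respect to the order $\le_\sigma$ defined by $v \le_\sigma v'$ iff $v' - v \in \sigma$. -/
/-!
If `w ≤_σ v` with `w ≠ v`, then `u = v - w` is a nonzero lattice vector of `σ`, so every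
`v + k u` (`k ∈ ℕ`) is a nonzero lattice point of `σ` (strong convexity rules out `0`), hence
lies in `Γ(σ)`. Since `v` lies in the open segment between `w ∈ Γ(σ)` and `v + k u`, any face of
`Γ(σ)` through `v` contains the whole unbounded progression `v + k u`, so it is not compact.
-/

open Bornology Function

theorem IsExtreme.add_smul_mem {𝕜 E : Type*} [Field 𝕜] [LinearOrder 𝕜] [IsStrictOrderedRing 𝕜]
    [AddCommGroup E] [Module 𝕜 E] {A F : Set E} (hF : IsExtreme 𝕜 A F) {x u : E} (hx : x ∈ F)
    (hxu : x - u ∈ A) {t : 𝕜} (ht : 0 ≤ t) (hxt : x + t • u ∈ A) : x + t • u ∈ F := by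
  obtain rfl | ht₀ := ht.eq_or_lt
  · simpa using hx
  refine hF.right_mem_of_mem_openSegment hxu hxt hx
    ⟨t / (1 + t), 1 / (1 + t), by positivity, by positivity, by field_simp; ring, ?_⟩
  match_scalars <;> field_simp <;> ring

theorem Bornology.IsBounded.eq_zero_of_forall_add_natCast_smul_mem {E : Type*}
    [NormedAddCommGroup E] [NormedSpace ℝ E] {s : Set E} (hs : IsBounded s) {x u : E}
    (h : ∀ k : ℕ, x + (k : ℝ) • u ∈ s) : u = 0 := by
  by_contra hu0
  have hu : 0 < ‖u‖ := norm_pos_iff.2 hu0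
  obtain ⟨C, hC⟩ := hs.exists_norm_le
  obtain ⟨k, hk⟩ := exists_nat_gt ((C + ‖x‖) / ‖u‖)
  rw [div_lt_iff₀ hu] at hk
  have := norm_sub_le (x + (k : ℝ) • u) x
  rw [add_sub_cancel_left, norm_smul, Real.norm_natCast] at this
  linarith [hC _ (h k)]

section LatticePoints

variable {M E : Type*} [AddCommGroup M] [NormedAddCommGroup E] [NormedSpace ℝ E]
  {c : M →+ E} {σ : PointedCone ℝ E}

theorem add_natCast_smul_sub_mem_convexHull (hc : Injective c)
    (hσ : ∀ x ∈ σ, -x ∈ σ → x = 0) {v w : M} (hvσ : c v ∈ σ) (hv0 : v ≠ 0)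
    (hwv : c v - c w ∈ σ) (k : ℕ) :
    c v + (k : ℝ) • (c v - c w) ∈ convexHull ℝ (c '' {p | c p ∈ σ ∧ p ≠ 0}) := by
  have hcp : c (v + k • (v - w)) = c v + (k : ℝ) • (c v - c w) := by
    rw [map_add, map_nsmul, map_sub, Nat.cast_smul_eq_nsmul]
  have hray : c v + (k : ℝ) • (c v - c w) ∈ σ := σ.add_mem hvσ (σ.smul_mem k.cast_nonneg hwv)
  refine subset_convexHull ℝ _ ⟨_, ⟨hcp ▸ hray, fun h0 => hv0 ?_⟩, hcp⟩
  rw [h0, map_zero, eq_comm, add_eq_zero_iff_eq_neg'] at hcp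
  have hneg : -c v ∈ σ := hcp ▸ σ.smul_mem k.cast_nonneg hwv
  exact (map_eq_zero_iff c hc).1 (hσ _ hvσ hneg)

theorem eq_of_sub_mem_of_mem_isExtreme_convexHull (hc : Injective c)
    (hσ : ∀ x ∈ σ, -x ∈ σ → x = 0) {F : Set E}
    (hF : IsExtreme ℝ (convexHull ℝ (c '' {p | c p ∈ σ ∧ p ≠ 0})) F) (hFb : IsBounded F)
    {v w : M} (hvσ : c v ∈ σ) (hv0 : v ≠ 0) (hvF : c v ∈ F) (hwσ : c w ∈ σ) (hw0 : w ≠ 0)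
    (hwv : c v - c w ∈ σ) : w = v := by
  have hray := add_natCast_smul_sub_mem_convexHull hc hσ hvσ hv0 hwv
  refine hc (sub_eq_zero.1 (hFb.eq_zero_of_forall_add_natCast_smul_mem (x := c v) fun k => ?_)).symm
  refine hF.add_smul_mem hvF ?_ k.cast_nonneg (hray k)
  rw [sub_sub_cancel]
  exact subset_convexHull ℝ _ ⟨w, ⟨hwσ, hw0⟩, rfl⟩

end LatticePoints

theorem stmt_9_general (n : ℕ) (σ : PointedCone ℝ (Fin n → ℝ))
    (c : (Fin n → ℤ) → (Fin n → ℝ))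
    (hc : ∀ v i, c v i = (v i : ℝ))
    (hsc : ∀ x : Fin n → ℝ, x ∈ σ → -x ∈ σ → x = 0)
    (Γ : Set (Fin n → ℝ))
    (hΓ : Γ = convexHull ℝ (c '' {v : Fin n → ℤ | c v ∈ σ ∧ v ≠ 0}))
    (v : Fin n → ℤ) (hvσ : c v ∈ σ) (hv0 : v ≠ 0)
    -- `c v` lies on a compact face of `Γ(σ)`
    (hvF : ∃ F : Set (Fin n → ℝ), IsExtreme ℝ Γ F ∧ IsCompact F ∧ c v ∈ F) :
    ∀ w : Fin n → ℤ, c w ∈ σ → w ≠ 0 → c v - c w ∈ σ → w = v := by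
  intro w hwσ hw0 hwv
  obtain ⟨F, hF, hFc, hvF⟩ := hvF
  obtain rfl : c = AddMonoidHom.compLeft (Int.castAddHom ℝ) (Fin n) :=
    funext fun p => funext (hc p)
  subst hΓ
  exact eq_of_sub_mem_of_mem_isExtreme_convexHull Int.cast_injective.comp_left hsc hF
    hFc.isBounded hvσ hv0 hvF hwσ hw0 hwv

/-- Every lattice point on the union `∂_cΓ(σ)` of the compact faces of the
convex hull `Γ(σ)` of the nonzero lattice points of a strongly convex rational
polyhedral cone `σ` is a minimal element of `(σ ∩ N) \ {0}` for the order
`v ≤_σ v'` iff `v' - v ∈ σ`  (terminal valuations are minimal valuations). -/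
theorem stmt_9 (n : ℕ) (σ : PointedCone ℝ (Fin n → ℝ))
    (c : (Fin n → ℤ) → (Fin n → ℝ))
    (hc : ∀ v i, c v i = (v i : ℝ))
    (hgen : ∃ S : Finset (Fin n → ℤ), σ = Submodule.span {r : ℝ // 0 ≤ r} (c '' ↑S))
    (hsc : ∀ x : Fin n → ℝ, x ∈ σ → -x ∈ σ → x = 0)
    (Γ : Set (Fin n → ℝ))
    (hΓ : Γ = convexHull ℝ (c '' {v : Fin n → ℤ | c v ∈ σ ∧ v ≠ 0}))
    (v : Fin n → ℤ) (hvσ : c v ∈ σ) (hv0 : v ≠ 0)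
    -- `c v` lies on a compact face of `Γ(σ)`
    (hvF : ∃ F : Set (Fin n → ℝ), IsExtreme ℝ Γ F ∧ IsCompact F ∧ c v ∈ F) :
    ∀ w : Fin n → ℤ, c w ∈ σ → w ≠ 0 → c v - c w ∈ σ → w = v :=
  stmt_9_general n σ c hc hsc Γ hΓ v hvσ hv0 hvF
end

section
/- Let $\sigma \subset \mathbb{R}^3$ be the cone spanned by $v_1 = (1,0,0)$, $v_2 = (0,1,0)$, $v_3 = (1,1,2)$, with lattice $N = \mathbb{Z}^3$. Then the lattice point $v = (1,1,1)$ lies in $\sigma$, is a minimal element of $(\sigma \cap N) \setminus \{0\}$ for the order $v \le_\sigma v'$ iff $v' - v \in \sigma$, but does not lie on the union of compact faces of the convex hull $\Gamma(\sigma)$ of the nonzero lattice points of $\sigma$. -/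
/-!
Membership in `σ` is cut out by `0 ≤ x₂ ≤ 2x₀` and `x₂ ≤ 2x₁`, so for an integer point `w`
with `w` and `v - w` in `σ` these inequalities force `w = 0` or `w = v`. On the other hand `v`
is the midpoint of the lattice points `(1,1,0)` and `(1,1,2)`, so every face of `Γ(σ)` through
`v` contains `(1,1,0)`; since `(n+1,1,0)` is in turn the midpoint of `(n,1,0)` and `(n+2,1,0)`,
such a face contains the whole ray `(n+1,1,0)` and is unbounded.
-/

section Extreme

variable {𝕜 E : Type*} [Field 𝕜] [LinearOrder 𝕜] [IsStrictOrderedRing 𝕜]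
  [AddCommGroup E] [Module 𝕜 E]

theorem IsExtreme.add_natCast_add_one_smul_mem {A F : Set E} (hF : IsExtreme 𝕜 A F) {x d : E}
    (hA : ∀ n : ℕ, x + (n : 𝕜) • d ∈ A) (hx : x + d ∈ F) (n : ℕ) :
    x + ((n : 𝕜) + 1) • d ∈ F := by
  induction n with
  | zero => simpa using hx
  | succ n ih =>
    have hprev : x + ((n : 𝕜) + 1) • d - d ∈ A := by
      convert hA n using 1; module
    have hnext : x + ((n : 𝕜) + 1) • d + d ∈ A := by
      convert hA (n + 2) using 1; push_cast; module
    convert hF.right_mem_of_mem_openSegment hprev hnext ih (mem_openSegment_sub_add _ _) using 1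
    push_cast; module

end Extreme

theorem not_isBounded_of_add_natCast_add_one_smul_mem {E : Type*} [NormedAddCommGroup E]
    [NormedSpace ℝ E] {F : Set E} {x d : E} (hd : d ≠ 0)
    (h : ∀ n : ℕ, x + ((n : ℝ) + 1) • d ∈ F) : ¬ Bornology.IsBounded F := by
  intro hF
  obtain ⟨R, hR⟩ := hF.exists_norm_le
  obtain ⟨n, hn⟩ := exists_nat_gt ((R + ‖x‖) / ‖d‖)
  have hd' : 0 < ‖d‖ := norm_pos_iff.mpr hd
  have hlarge : R + ‖x‖ < ((n : ℝ) + 1) * ‖d‖ := by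
    rw [div_lt_iff₀ hd'] at hn
    nlinarith
  have hsmall : ((n : ℝ) + 1) * ‖d‖ ≤ R + ‖x‖ :=
    calc ((n : ℝ) + 1) * ‖d‖ = ‖((n : ℝ) + 1) • d‖ := by
          rw [norm_smul, Real.norm_of_nonneg (by positivity)]
      _ ≤ ‖x + ((n : ℝ) + 1) • d‖ + ‖x‖ := norm_le_add_norm_add' _ _
      _ ≤ R + ‖x‖ := by gcongr; exact hR _ (h n)
  linarith

def exampleCone : Set (Fin 3 → ℝ) :=
  {x | ∃ a b c : ℝ, 0 ≤ a ∧ 0 ≤ b ∧ 0 ≤ c ∧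
    x = a • (![1, 0, 0] : Fin 3 → ℝ) + b • ![0, 1, 0] + c • ![1, 1, 2]}

theorem mem_exampleCone_iff {x : Fin 3 → ℝ} :
    x ∈ exampleCone ↔ 0 ≤ x 2 ∧ x 2 ≤ 2 * x 0 ∧ x 2 ≤ 2 * x 1 := by
  constructor
  · rintro ⟨a, b, c, ha, hb, hc, rfl⟩
    simp only [Pi.add_apply, Pi.smul_apply, Matrix.cons_val, smul_eq_mul]
    refine ⟨by positivity, by linarith, by linarith⟩
  · rintro ⟨h2, h0, h1⟩
    refine ⟨x 0 - x 2 / 2, x 1 - x 2 / 2, x 2 / 2, by linarith, by linarith, by linarith, ?_⟩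
    ext i
    fin_cases i <;> simp

def latticeCone : Set (Fin 3 → ℤ) := {w | 0 ≤ w 2 ∧ w 2 ≤ 2 * w 0 ∧ w 2 ≤ 2 * w 1}

theorem intCast_mem_exampleCone_iff {w : Fin 3 → ℤ} :
    (fun i ↦ (w i : ℝ)) ∈ exampleCone ↔ w ∈ latticeCone := by
  simp only [mem_exampleCone_iff, latticeCone, Set.mem_ofPred_eq]
  norm_cast

theorem eq_of_mem_latticeCone_of_sub_mem {w : Fin 3 → ℤ} (hw : w ∈ latticeCone)
    (hw0 : w ≠ 0) (hvw : ![1, 1, 1] - w ∈ latticeCone) : w = ![1, 1, 1] := by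
  simp only [latticeCone, Set.mem_ofPred_eq, Pi.sub_apply] at hw hvw
  simp only [Matrix.cons_val] at hvw
  have : w 0 ≠ 0 ∨ w 1 ≠ 0 ∨ w 2 ≠ 0 := by
    contrapose! hw0; ext i; fin_cases i <;> simp [hw0]
  ext i; fin_cases i <;> simp <;> omega

theorem eq_of_intCast_mem_exampleCone_of_sub_mem {w : Fin 3 → ℤ}
    (hw : (fun i ↦ (w i : ℝ)) ∈ exampleCone) (hw0 : w ≠ 0)
    (hvw : (fun i ↦ ((![1, 1, 1] : Fin 3 → ℤ) i : ℝ)) - (fun i ↦ (w i : ℝ)) ∈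
      exampleCone) :
    w = ![1, 1, 1] := by
  refine eq_of_mem_latticeCone_of_sub_mem (intCast_mem_exampleCone_iff.1 hw) hw0 ?_
  rw [← intCast_mem_exampleCone_iff]
  convert hvw using 1
  ext i; simp

def exampleHull : Set (Fin 3 → ℝ) :=
  convexHull ℝ
    ((fun w i ↦ (w i : ℝ)) '' {w : Fin 3 → ℤ | (fun i ↦ (w i : ℝ)) ∈ exampleCone ∧ w ≠ 0})

theorem intCast_mem_exampleHull (a b c : ℤ) (h : ![a, b, c] ∈ latticeCone)
    (h0 : ![a, b, c] ≠ 0) :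
    ![(a : ℝ), b, c] ∈ exampleHull := by
  refine subset_convexHull ℝ _ ⟨_, ⟨intCast_mem_exampleCone_iff.2 h, h0⟩, ?_⟩
  ext i; fin_cases i <;> simp

theorem one_one_zero_mem_of_isExtreme_exampleHull {F : Set (Fin 3 → ℝ)}
    (hF : IsExtreme ℝ exampleHull F) (hv : ![1, 1, 1] ∈ F) : ![1, 1, 0] ∈ F := by
  have hsegment := mem_openSegment_sub_add (𝕜 := ℝ) ![(1 : ℝ), 1, 1] ![0, 0, 1]
  rw [show ![(1 : ℝ), 1, 1] - ![0, 0, 1] = ![1, 1, 0] by ext i; fin_cases i <;> simp,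
    show ![(1 : ℝ), 1, 1] + ![0, 0, 1] = ![1, 1, 2] by ext i; fin_cases i <;> norm_num]
    at hsegment
  have h110 : ![(1 : ℝ), 1, 0] ∈ exampleHull := by
    exact_mod_cast intCast_mem_exampleHull 1 1 0 (by simp [latticeCone]) (by simp)
  have h112 : ![(1 : ℝ), 1, 2] ∈ exampleHull := by
    exact_mod_cast intCast_mem_exampleHull 1 1 2 (by simp [latticeCone]) (by simp)
  exact hF.left_mem_of_mem_openSegment h110 h112 hv hsegment

theorem not_isCompact_of_isExtreme_exampleHull {F : Set (Fin 3 → ℝ)}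
    (hF : IsExtreme ℝ exampleHull F) (hv : ![1, 1, 1] ∈ F) : ¬ IsCompact F := by
  have hray := hF.add_natCast_add_one_smul_mem (x := ![(0 : ℝ), 1, 0]) (d := ![1, 0, 0])
    (fun n ↦ ?_) ?_
  · exact fun hFc ↦
      not_isBounded_of_add_natCast_add_one_smul_mem (by simp) hray hFc.isBounded
  · convert intCast_mem_exampleHull n 1 0 (by simp [latticeCone]) (by simp) using 1
    ext i; fin_cases i <;> simp
  · convert one_one_zero_mem_of_isExtreme_exampleHull hF hv using 1
    ext i; fin_cases i <;> simp

/-- In the cone `σ ⊂ ℝ³` spanned by `(1,0,0)`, `(0,1,0)`, `(1,1,2)`, the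
lattice point `v = (1,1,1)` lies in `σ`, is minimal among nonzero lattice
points of `σ` for the order `≤_σ`, but does not lie on any compact face of the
convex hull `Γ(σ)` of the nonzero lattice points of `σ`: a Nash (minimal)
valuation which is not a terminal valuation. -/
theorem stmt_10
    (σ : Set (Fin 3 → ℝ))
    (hσ : σ = {x | ∃ a b c : ℝ, 0 ≤ a ∧ 0 ≤ b ∧ 0 ≤ c ∧
      x = a • (![1, 0, 0] : Fin 3 → ℝ) + b • ![0, 1, 0] + c • ![1, 1, 2]})
    (cast : (Fin 3 → ℤ) → (Fin 3 → ℝ))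
    (hcast : ∀ w i, cast w i = (w i : ℝ))
    (Γ : Set (Fin 3 → ℝ))
    (hΓ : Γ = convexHull ℝ (cast '' {w : Fin 3 → ℤ | cast w ∈ σ ∧ w ≠ 0})) :
    cast ![1, 1, 1] ∈ σ ∧
    (∀ w : Fin 3 → ℤ, cast w ∈ σ → w ≠ 0 →
      cast ![1, 1, 1] - cast w ∈ σ → w = ![1, 1, 1]) ∧
    ¬ ∃ F : Set (Fin 3 → ℝ), IsExtreme ℝ Γ F ∧ IsCompact F ∧ cast ![1, 1, 1] ∈ F := by
  obtain rfl : cast = fun w i ↦ (w i : ℝ) := funext fun w ↦ funext (hcast w)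
  obtain rfl : σ = exampleCone := hσ
  obtain rfl : Γ = exampleHull := hΓ
  have hv : (fun i ↦ ((![1, 1, 1] : Fin 3 → ℤ) i : ℝ)) = ![1, 1, 1] := by
    ext i; fin_cases i <;> simp
  refine ⟨intCast_mem_exampleCone_iff.2 (by simp [latticeCone]),
    fun w ↦ eq_of_intCast_mem_exampleCone_of_sub_mem, ?_⟩
  rintro ⟨F, hF, hFc, hvF⟩
  exact not_isCompact_of_isExtreme_exampleHull hF (hv ▸ hvF) hFc
end

section
/- Let $v_1 = (1,0,0)$, $v_2 = (0,1,0)$, $v_3 = (1,1,2)$ in $\mathbb{Z}^3$ and let $\sigma$ be the cone they span. Then $v = (1,1,1) = \tfrac{1}{2}(v_1 + v_2 + v_3)$ lies in the interior of $\sigma$, and $v$ cannot be written as $w + u$ with $w$ a nonzero lattice point of $\sigma$ different from $v$ and $u \in \sigma$. -/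
/-!
The cone `σ` is cut out by `0 ≤ z`, `z ≤ 2x`, `z ≤ 2y`, and `v = (1,1,1)` satisfies these strictly.
If `v = w + u` with `w` integral and `w, u ∈ σ`, then `w` and `v - w` both lie in `σ`; integrality
gives `w₂ ∈ {0, 1}`, and the remaining inequalities pin `w` down to `0` or `v`.
-/

def sigmaCone : Set (Fin 3 → ℝ) :=
  {x | ∃ a b c : ℝ, 0 ≤ a ∧ 0 ≤ b ∧ 0 ≤ c ∧
    x = a • (![1, 0, 0] : Fin 3 → ℝ) + b • ![0, 1, 0] + c • ![1, 1, 2]}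

lemma mem_sigmaCone_iff {x : Fin 3 → ℝ} :
    x ∈ sigmaCone ↔ 0 ≤ x 2 ∧ x 2 ≤ 2 * x 0 ∧ x 2 ≤ 2 * x 1 := by
  constructor
  · rintro ⟨a, b, c, ha, hb, hc, rfl⟩
    simp only [Pi.add_apply, Pi.smul_apply, smul_eq_mul, Matrix.cons_val]
    refine ⟨?_, ?_, ?_⟩ <;> linarith
  · rintro ⟨h0, h1, h2⟩
    refine ⟨x 0 - x 2 / 2, x 1 - x 2 / 2, x 2 / 2, by linarith, by linarith, by linarith, ?_⟩
    funext i
    fin_cases i <;> simp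

lemma mem_interior_sigmaCone {x : Fin 3 → ℝ}
    (hx : 0 < x 2 ∧ x 2 < 2 * x 0 ∧ x 2 < 2 * x 1) : x ∈ interior sigmaCone := by
  have hopen : IsOpen {x : Fin 3 → ℝ | 0 < x 2 ∧ x 2 < 2 * x 0 ∧ x 2 < 2 * x 1} := by
    have hc (i : Fin 3) : Continuous fun x : Fin 3 → ℝ => x i := continuous_apply i
    exact (isOpen_lt continuous_const (hc 2)).inter
      ((isOpen_lt (hc 2) (continuous_const.mul (hc 0))).inter
        (isOpen_lt (hc 2) (continuous_const.mul (hc 1))))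
  refine interior_maximal (fun y hy => ?_) hopen hx
  exact mem_sigmaCone_iff.2 ⟨hy.1.le, hy.2.1.le, hy.2.2.le⟩

lemma eq_zero_or_eq_ones_of_mem_sigmaCone {w : Fin 3 → ℤ}
    (hw : (fun i => (w i : ℝ)) ∈ sigmaCone) (hu : (fun i => 1 - (w i : ℝ)) ∈ sigmaCone) :
    w = 0 ∨ w = ![1, 1, 1] := by
  obtain ⟨hw₁, hw₂, hw₃⟩ := mem_sigmaCone_iff.1 hw
  obtain ⟨hu₁, hu₂, hu₃⟩ := mem_sigmaCone_iff.1 hu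
  have hw₁ : 0 ≤ w 2 := by exact_mod_cast hw₁
  have hw₂ : w 2 ≤ 2 * w 0 := by exact_mod_cast hw₂
  have hw₃ : w 2 ≤ 2 * w 1 := by exact_mod_cast hw₃
  have hu₁ : w 2 ≤ 1 := by exact_mod_cast (sub_nonneg.1 hu₁)
  have hu₂ : 1 - w 2 ≤ 2 * (1 - w 0) := by exact_mod_cast hu₂
  have hu₃ : 1 - w 2 ≤ 2 * (1 - w 1) := by exact_mod_cast hu₃
  have : (w 0 = 0 ∧ w 1 = 0 ∧ w 2 = 0) ∨ (w 0 = 1 ∧ w 1 = 1 ∧ w 2 = 1) := by omega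
  rcases this with ⟨h0, h1, h2⟩ | ⟨h0, h1, h2⟩
  · left; funext i; fin_cases i <;> simpa
  · right; funext i; fin_cases i <;> simpa

/-- For the cone `σ ⊂ ℝ³` spanned by `v₁ = (1,0,0)`, `v₂ = (0,1,0)`,
`v₃ = (1,1,2)`: the point `v = (1,1,1) = ½(v₁+v₂+v₃)` lies in the interior of
`σ`, and `v` cannot be written as `w + u` with `w` a nonzero lattice point of
`σ` different from `v` and `u ∈ σ`. -/
theorem stmt_11
    (σ : Set (Fin 3 → ℝ))
    (hσ : σ = {x | ∃ a b c : ℝ, 0 ≤ a ∧ 0 ≤ b ∧ 0 ≤ c ∧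
      x = a • (![1, 0, 0] : Fin 3 → ℝ) + b • ![0, 1, 0] + c • ![1, 1, 2]})
    (cast : (Fin 3 → ℤ) → (Fin 3 → ℝ))
    (hcast : ∀ w i, cast w i = (w i : ℝ)) :
    cast ![1, 1, 1] = (1 / 2 : ℝ) • (![1, 0, 0] + ![0, 1, 0] + ![1, 1, 2]) ∧
    cast ![1, 1, 1] ∈ interior σ ∧
    ¬ ∃ (w : Fin 3 → ℤ) (u : Fin 3 → ℝ), cast w ∈ σ ∧ w ≠ 0 ∧ w ≠ ![1, 1, 1] ∧
      u ∈ σ ∧ cast ![1, 1, 1] = cast w + u := by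
  obtain rfl : cast = fun w i => (w i : ℝ) := funext₂ hcast
  change σ = sigmaCone at hσ
  subst hσ
  have hv : (fun i => ((![1, 1, 1] : Fin 3 → ℤ) i : ℝ)) = 1 := by
    funext i; fin_cases i <;> simp
  simp only [hv]
  refine ⟨?_, mem_interior_sigmaCone (by norm_num), ?_⟩
  · funext i; fin_cases i <;> norm_num
  · rintro ⟨w, u, hw, hw0, hwv, hu, hsum⟩
    have hu' : u = fun i => 1 - (w i : ℝ) := by
      funext i
      have := congrFun hsum i
      simp only [Pi.one_apply, Pi.add_apply] at this
      linarith
    rcases eq_zero_or_eq_ones_of_mem_sigmaCone hw (hu' ▸ hu) with h | h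
    exacts [hw0 h, hwv h]
end
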